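/- Let Λ be an artin algebra and X a module in C_Λ = Gen(Q̃) ∩ Cogen(Q̃). Then the projective cover P(X) of X is injective, and the injective envelope I(X) of X is projective; consequently both P(X) and I(X) lie in C_Λ. -/

import Mathlib

open Function LinearMap

section Prelim

variable (Λ : Type) [Ring Λ]

/-- A module that is both projective and injective. -/
def IsProjInj (M : Type) [AddCommGroup M] [Module Λ M] : Prop :=
  Module.Projective Λ M ∧ Module.Injective Λ M

/-- `X` is generated by the projective-injective modules: it is a quotient of a
finitely generated projective-injective module (equivalently, of a finite direct sum of
copies of `Q̃`). -/
def GenByProjInj (X : Type) [AddCommGroup X] [Module Λ X] : Prop :=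
  ∃ Q : ModuleCat.{0} Λ, Module.Finite Λ Q ∧ IsProjInj Λ Q ∧
    ∃ f : Q →ₗ[Λ] X, Surjective f

/-- `X` is cogenerated by the projective-injective modules: it embeds into a
finitely generated projective-injective module. -/
def CogenByProjInj (X : Type) [AddCommGroup X] [Module Λ X] : Prop :=
  ∃ Q : ModuleCat.{0} Λ, Module.Finite Λ Q ∧ IsProjInj Λ Q ∧
    ∃ f : X →ₗ[Λ] Q, Injective f

/-- Membership in `C_Λ = Gen(Q̃) ∩ Cogen(Q̃)`. -/
def MemC (X : Type) [AddCommGroup X] [Module Λ X] : Prop :=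
  GenByProjInj Λ X ∧ CogenByProjInj Λ X

/-- `pdLEcat Λ n X` : `X` has projective dimension at most `n`. -/
def pdLEcat : ℕ → ModuleCat.{0} Λ → Prop
  | 0, X => Module.Projective Λ X
  | n+1, X => ∃ (P : ModuleCat.{0} Λ) (g : P →ₗ[Λ] X),
      Module.Projective Λ P ∧ Module.Finite Λ P ∧ Surjective g ∧
      pdLEcat n (ModuleCat.of Λ (↥(LinearMap.ker g)))

/-- Projective dimension at most `n`, for a bare module. -/
def pdLE (n : ℕ) (X : Type) [AddCommGroup X] [Module Λ X] : Prop :=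
  pdLEcat Λ n (ModuleCat.of Λ X)

/-- `idLEcat Λ n X` : `X` has injective dimension at most `n`. -/
def idLEcat : ℕ → ModuleCat.{0} Λ → Prop
  | 0, X => Module.Injective Λ X
  | n+1, X => ∃ (I : ModuleCat.{0} Λ) (f : X →ₗ[Λ] I),
      Module.Injective Λ I ∧ Injective f ∧
      idLEcat n (ModuleCat.of Λ (↥I ⧸ LinearMap.range f))

/-- Injective dimension at most `n`, for a bare module. -/
def idLE (n : ℕ) (X : Type) [AddCommGroup X] [Module Λ X] : Prop :=
  idLEcat Λ n (ModuleCat.of Λ X)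

/-- Global dimension at most `d` (on finitely generated modules). -/
def GlobalDimLE (d : ℕ) : Prop :=
  ∀ X : ModuleCat.{0} Λ, Module.Finite Λ X → pdLEcat Λ d X

/-- Global dimension exactly `d`. -/
def GlobalDimEq (d : ℕ) : Prop :=
  GlobalDimLE Λ d ∧ ∀ m, GlobalDimLE Λ m → d ≤ m

/-- `Ext¹_Λ(Y, X) = 0`, expressed by the splitting of all short exact sequences
`0 → X → E → Y → 0`. -/
def Ext1Vanish (Y X : Type) [AddCommGroup Y] [Module Λ Y]
    [AddCommGroup X] [Module Λ X] : Prop :=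
  ∀ (E : ModuleCat.{0} Λ) (f : X →ₗ[Λ] E) (g : E →ₗ[Λ] Y),
    Injective f → Surjective g → LinearMap.range f = LinearMap.ker g →
    ∃ r : E →ₗ[Λ] X, r ∘ₗ f = LinearMap.id

/-- `M` belongs to `add T`: `M` is a direct summand of a finite direct sum of copies of `T`. -/
def InAddOf (T M : Type) [AddCommGroup T] [Module Λ T]
    [AddCommGroup M] [Module Λ M] : Prop :=
  ∃ (m : ℕ) (p : (Fin m → T) →ₗ[Λ] M) (s : M →ₗ[Λ] (Fin m → T)),
    p ∘ₗ s = LinearMap.id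

/-- A (classical) tilting module. -/
def IsTilting (T : Type) [AddCommGroup T] [Module Λ T] : Prop :=
  pdLE Λ 1 T ∧ Ext1Vanish Λ T T ∧
  ∃ (T0 T1 : ModuleCat.{0} Λ) (f : Λ →ₗ[Λ] T0) (g : T0 →ₗ[Λ] T1),
    InAddOf Λ T T0 ∧ InAddOf Λ T T1 ∧ Injective f ∧ Surjective g ∧
    LinearMap.range f = LinearMap.ker g

/-- A (classical) cotilting module. -/
def IsCotilting (T : Type) [AddCommGroup T] [Module Λ T] : Prop :=
  idLE Λ 1 T ∧ Ext1Vanish Λ T T ∧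
  ∀ (I : ModuleCat.{0} Λ), Module.Finite Λ I → Module.Injective Λ I →
    ∃ (C0 C1 : ModuleCat.{0} Λ) (u : C0 →ₗ[Λ] C1) (v : C1 →ₗ[Λ] I),
      InAddOf Λ T C0 ∧ InAddOf Λ T C1 ∧ Injective u ∧ Surjective v ∧
      LinearMap.range u = LinearMap.ker v

/-- Dominant dimension at least `2`: there is an exact sequence `0 → Λ → Q₀ → Q₁`
with `Q₀, Q₁` projective-injective. -/
def DomdimGE2 : Prop :=
  ∃ (Q0 Q1 : ModuleCat.{0} Λ) (f : Λ →ₗ[Λ] Q0) (g : Q0 →ₗ[Λ] Q1),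
    Module.Finite Λ Q0 ∧ IsProjInj Λ Q0 ∧ Module.Finite Λ Q1 ∧ IsProjInj Λ Q1 ∧
    Injective f ∧ LinearMap.range f = LinearMap.ker g

/-- An indecomposable (nonzero) module: the only idempotent endomorphisms are `0` and `id`. -/
def Indecomposable (M : Type) [AddCommGroup M] [Module Λ M] : Prop :=
  (∃ x : M, x ≠ 0) ∧ ∀ e : M →ₗ[Λ] M, e ∘ₗ e = e → e = 0 ∨ e = LinearMap.id

/-- A right minimal morphism. -/
def RightMinimal {B C : Type} [AddCommGroup B] [Module Λ B] [AddCommGroup C] [Module Λ C]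
    (f : B →ₗ[Λ] C) : Prop :=
  ∀ g : B →ₗ[Λ] B, f ∘ₗ g = f → Bijective g

/-- A left minimal morphism. -/
def LeftMinimal {A B : Type} [AddCommGroup A] [Module Λ A] [AddCommGroup B] [Module Λ B]
    (f : A →ₗ[Λ] B) : Prop :=
  ∀ g : B →ₗ[Λ] B, g ∘ₗ f = f → Bijective g

/-- `f : P → X` is a projective cover: `P` is projective, `f` is surjective and its kernel
is superfluous. -/
def IsProjCover {P X : Type} [AddCommGroup P] [Module Λ P] [AddCommGroup X] [Module Λ X]
    (f : P →ₗ[Λ] X) : Prop :=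
  Module.Projective Λ P ∧ Surjective f ∧
    ∀ N : Submodule Λ P, N ⊔ LinearMap.ker f = ⊤ → N = ⊤

/-- `f : X → I` is an injective envelope: `I` is injective, `f` is injective and its image is
essential. -/
def IsInjEnv {X I : Type} [AddCommGroup X] [Module Λ X] [AddCommGroup I] [Module Λ I]
    (f : X →ₗ[Λ] I) : Prop :=
  Module.Injective Λ I ∧ Injective f ∧
    ∀ N : Submodule Λ I, N ⊓ LinearMap.range f = ⊥ → N = ⊥

/-- An essential submodule. -/
def IsEssentialSub {M : Type} [AddCommGroup M] [Module Λ M] (N : Submodule Λ M) : Prop :=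
  ∀ N' : Submodule Λ M, N ⊓ N' = ⊥ → N' = ⊥

/-- A uniserial module: submodules are totally ordered by inclusion. -/
def Uniserial (M : Type) [AddCommGroup M] [Module Λ M] : Prop :=
  ∀ N₁ N₂ : Submodule Λ M, N₁ ≤ N₂ ∨ N₂ ≤ N₁

/-- The radical of a module: the intersection of its maximal submodules. -/
def radSub (M : Type) [AddCommGroup M] [Module Λ M] : Submodule Λ M :=
  sInf {N : Submodule Λ M | IsCoatom N}

/-- An almost split (Auslander-Reiten) sequence `0 → A → E → C → 0`. -/
def IsAlmostSplitSeq {A E C : Type} [AddCommGroup A] [Module Λ A]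
    [AddCommGroup E] [Module Λ E] [AddCommGroup C] [Module Λ C]
    (f : A →ₗ[Λ] E) (g : E →ₗ[Λ] C) : Prop :=
  Injective f ∧ Surjective g ∧ LinearMap.range f = LinearMap.ker g ∧
  (¬∃ r : E →ₗ[Λ] A, r ∘ₗ f = LinearMap.id) ∧
  Indecomposable Λ A ∧ Indecomposable Λ C ∧
  ∀ (Z : ModuleCat.{0} Λ) (h : Z →ₗ[Λ] C), Module.Finite Λ Z →
    (¬∃ s : C →ₗ[Λ] Z, h ∘ₗ s = LinearMap.id) → ∃ l : (Z →ₗ[Λ] E), g ∘ₗ l = h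

/-- `N` is the Auslander-Reiten translate `τ M` of `M`: writing `M ≅ P ⊕ (⊕ᵢ Cᵢ)` with `P`
projective and `Cᵢ` indecomposable ends of almost split sequences `0 → Aᵢ → Eᵢ → Cᵢ → 0`,
we have `N ≅ ⊕ᵢ Aᵢ`. -/
def IsTauOf (N M : Type) [AddCommGroup N] [Module Λ N] [AddCommGroup M] [Module Λ M] : Prop :=
  ∃ (r : ℕ) (P : ModuleCat.{0} Λ) (A E C : Fin r → ModuleCat.{0} Λ)
    (f : ∀ i, (A i : Type) →ₗ[Λ] (E i : Type)) (g : ∀ i, (E i : Type) →ₗ[Λ] (C i : Type)),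
    Module.Projective Λ P ∧ (∀ i, IsAlmostSplitSeq Λ (f i) (g i)) ∧
    Nonempty (M ≃ₗ[Λ] (Prod (P : Type) ((i : Fin r) → (C i : Type)))) ∧
    Nonempty (N ≃ₗ[Λ] (∀ i, (A i : Type)))

end Prelim

section HomModule

variable {R : Type} [Ring R] {T M : Type} [AddCommGroup T] [Module R T]
  [AddCommGroup M] [Module R M]

/-- `Hom_R(T, M)` as a left module over `B = End_R(T)ᵒᵖ`, via precomposition. -/
instance instSMulHomEndOp : SMul (Module.End R T)ᵐᵒᵖ (T →ₗ[R] M) :=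
  ⟨fun b f => f ∘ₗ b.unop⟩

lemma endOp_smul_def (b : (Module.End R T)ᵐᵒᵖ) (f : T →ₗ[R] M) :
    b • f = f ∘ₗ b.unop := rfl

instance instMulActionHomEndOp : MulAction (Module.End R T)ᵐᵒᵖ (T →ₗ[R] M) where
  one_smul f := by ext x; rfl
  mul_smul b c f := by ext x; rfl

instance instDistribMulActionHomEndOp :
    DistribMulAction (Module.End R T)ᵐᵒᵖ (T →ₗ[R] M) where
  smul_zero b := by ext x; rfl
  smul_add b f g := by ext x; rfl

instance instModuleHomEndOp : Module (Module.End R T)ᵐᵒᵖ (T →ₗ[R] M) where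
  add_smul b c f := by ext x; simp [endOp_smul_def]
  zero_smul f := by ext x; simp [endOp_smul_def]

end HomModule

/-! A module in `C_Λ` is a quotient of a finitely generated projective-injective module `Q` and
a submodule of another one, `Q'`. Lifting `Q ↠ X` through the projective cover `P ↠ X` gives a map
`Q → P` which is onto because the kernel of `P ↠ X` is superfluous; as `P` is projective it splits,
so `P` is a direct summand of `Q`. Dually, extending `X ↪ Q'` along the injective envelope
`X ↪ I` gives a map `I → Q'` which is injective because `X` is essential in `I`, and it splits since
`I` is injective. A direct summand of a finitely generated projective-injective module is
projective-injective and, being a quotient and a submodule of it, lies in `C_Λ`. -/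

universe u v

theorem Module.Injective.of_split {R : Type u} [Ring R] {M N : Type v}
    [AddCommGroup M] [Module R M] [AddCommGroup N] [Module R N] [Module.Injective R M]
    (i : N →ₗ[R] M) (r : M →ₗ[R] N) (H : r ∘ₗ i = LinearMap.id) : Module.Injective R N := by
  refine ⟨fun X Y _ _ _ _ f hf g => ?_⟩
  obtain ⟨h, hh⟩ := Module.Injective.out f hf (i ∘ₗ g)
  exact ⟨r ∘ₗ h, fun x => by simpa [hh x] using LinearMap.congr_fun H (g x)⟩

section Covers

variable {R : Type u} [Ring R] {M N Q : Type v} [AddCommGroup M] [Module R M]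
  [AddCommGroup N] [Module R N] [AddCommGroup Q] [Module R Q]

theorem LinearMap.surjective_of_surjective_comp_of_ker_superfluous {f : M →ₗ[R] N}
    (hf : ∀ K : Submodule R M, K ⊔ ker f = ⊤ → K = ⊤) {h : Q →ₗ[R] M}
    (hfh : Surjective (f ∘ₗ h)) : Surjective h := by
  rw [← range_eq_top] at hfh ⊢
  apply hf
  rw [← Submodule.comap_map_eq, ← range_comp, hfh, Submodule.comap_top]

theorem LinearMap.injective_of_injective_comp_of_range_essential {g : N →ₗ[R] M}
    (hg : ∀ K : Submodule R M, K ⊓ range g = ⊥ → K = ⊥) {h : M →ₗ[R] Q}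
    (hhg : Injective (h ∘ₗ g)) : Injective h := by
  rw [← ker_eq_bot] at hhg ⊢
  apply hg
  rw [inf_comm, ← Submodule.map_comap_eq, ← ker_comp, hhg, Submodule.map_bot]

end Covers

section DirectSummand

variable {Λ : Type} [Ring Λ]

variable (Λ) in
def IsDirectSummandOfProjInj (M : Type) [AddCommGroup M] [Module Λ M] : Prop :=
  ∃ Q : ModuleCat.{0} Λ, Module.Finite Λ Q ∧ IsProjInj Λ Q ∧
    ∃ (i : M →ₗ[Λ] Q) (r : Q →ₗ[Λ] M), r ∘ₗ i = LinearMap.id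

variable {M X : Type} [AddCommGroup M] [Module Λ M] [AddCommGroup X] [Module Λ X]

theorem IsDirectSummandOfProjInj.isProjInj (hM : IsDirectSummandOfProjInj Λ M) :
    IsProjInj Λ M := by
  obtain ⟨Q, -, ⟨hQproj, hQinj⟩, i, r, H⟩ := hM
  exact ⟨Module.Projective.of_split i r H, Module.Injective.of_split i r H⟩

theorem IsDirectSummandOfProjInj.memC (hM : IsDirectSummandOfProjInj Λ M) : MemC Λ M := by
  obtain ⟨Q, hQfin, hQ, i, r, H⟩ := hM
  have hi : Injective i := LeftInverse.injective (LinearMap.congr_fun H)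
  have hr : Surjective r := RightInverse.surjective (LinearMap.congr_fun H)
  exact ⟨⟨Q, hQfin, hQ, r, hr⟩, ⟨Q, hQfin, hQ, i, hi⟩⟩

theorem IsProjCover.isDirectSummandOfProjInj {P : Type} [AddCommGroup P] [Module Λ P]
    {f : P →ₗ[Λ] X} (hf : IsProjCover Λ f) (hX : GenByProjInj Λ X) :
    IsDirectSummandOfProjInj Λ P := by
  obtain ⟨hPproj, hfsurj, hsmall⟩ := hf
  obtain ⟨Q, hQfin, hQ, q, hq⟩ := hX
  have := hQ.1
  obtain ⟨h, hfh⟩ := Module.projective_lifting_property f q hfsurj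
  have hhsurj : Surjective h :=
    surjective_of_surjective_comp_of_ker_superfluous hsmall (hfh ▸ hq)
  obtain ⟨s, hs⟩ := Module.projective_lifting_property h LinearMap.id hhsurj
  exact ⟨Q, hQfin, hQ, s, h, hs⟩

theorem IsInjEnv.isDirectSummandOfProjInj {I : Type} [AddCommGroup I] [Module Λ I]
    {g : X →ₗ[Λ] I} (hg : IsInjEnv Λ g) (hX : CogenByProjInj Λ X) :
    IsDirectSummandOfProjInj Λ I := by
  obtain ⟨hIinj, hginj, hess⟩ := hg
  obtain ⟨Q, hQfin, hQ, c, hc⟩ := hX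
  have := hQ.2
  obtain ⟨h, hhg⟩ := Module.Injective.extension_property Λ Q X I g hginj c
  have hhinj : Injective h :=
    injective_of_injective_comp_of_range_essential hess (hhg ▸ hc)
  obtain ⟨r, hr⟩ := Module.Injective.extension_property Λ I I Q h hhinj LinearMap.id
  exact ⟨Q, hQfin, hQ, h, r, hr⟩

end DirectSummand

theorem stmt2_general (Λ : Type) [Ring Λ]
    (X : Type) [AddCommGroup X] [Module Λ X] (hX : MemC Λ X)
    (P : Type) [AddCommGroup P] [Module Λ P]
    (f : P →ₗ[Λ] X) (hf : IsProjCover Λ f)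
    (I : Type) [AddCommGroup I] [Module Λ I]
    (g : X →ₗ[Λ] I) (hg : IsInjEnv Λ g) :
    (Module.Injective Λ P ∧ MemC Λ P) ∧ (Module.Projective Λ I ∧ MemC Λ I) := by
  have hP := hf.isDirectSummandOfProjInj hX.1
  have hI := hg.isDirectSummandOfProjInj hX.2
  exact ⟨⟨hP.isProjInj.2, hP.memC⟩, hI.isProjInj.1, hI.memC⟩

theorem stmt2 (Λ : Type) [Ring Λ] (k : Type) [CommRing k] [IsArtinianRing k] [Algebra k Λ]
    [Module.Finite k Λ]
    (X : Type) [AddCommGroup X] [Module Λ X] [Module.Finite Λ X] (hX : MemC Λ X)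
    (P : Type) [AddCommGroup P] [Module Λ P] [Module.Finite Λ P]
    (f : P →ₗ[Λ] X) (hf : IsProjCover Λ f)
    (I : Type) [AddCommGroup I] [Module Λ I] [Module.Finite Λ I]
    (g : X →ₗ[Λ] I) (hg : IsInjEnv Λ g) :
    (Module.Injective Λ P ∧ MemC Λ P) ∧ (Module.Projective Λ I ∧ MemC Λ I) :=
  stmt2_general Λ X hX P f hf I g hg
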